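/- arXiv:math/0606295 — 2 statements merged into one kernel-verified Lean document; each statement's English description precedes it below -/
import Mathlib

section
/- Let H be a Hilbert space, f_1,…,f_m ∈ H, and X = span{f_1,…,f_m}. If M ⊆ H is a subspace with dim M ≤ n minimizing Σ_{i=1}^m ‖f_i − P_{M'} f_i‖² over all subspaces M' with dim M' ≤ n, then the subspace W = P_X(M) (the image of M under orthogonal projection onto X) satisfies W ⊆ X, dim W ≤ n, and Σ_{i=1}^m ‖f_i − P_W f_i‖² = Σ_{i=1}^m ‖f_i − P_M f_i‖². -/
open Module

namespace Submodule

variable {𝕜 E : Type*} [RCLike 𝕜] [NormedAddCommGroup E] [InnerProductSpace 𝕜 E]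

theorem norm_sub_starProjection_le (K : Submodule 𝕜 E) [K.HasOrthogonalProjection] (y : E)
    {w : E} (hw : w ∈ K) : ‖y - K.starProjection y‖ ≤ ‖y - w‖ := by
  rw [starProjection_minimal]
  exact ciInf_le ⟨0, by rintro r ⟨x, rfl⟩; positivity⟩ (⟨w, hw⟩ : K)

theorem norm_sub_starProjection_le_of_mem (K : Submodule 𝕜 E) [K.HasOrthogonalProjection]
    {x : E} (hx : x ∈ K) (z : E) : ‖x - K.starProjection z‖ ≤ ‖x - z‖ :=
  calc ‖x - K.starProjection z‖ = ‖K.starProjection (x - z)‖ := by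
        rw [map_sub, starProjection_eq_self_iff.2 hx]
    _ ≤ ‖x - z‖ := K.norm_starProjection_apply_le _

/-- `P_W x` is at least as close to `x` as `P_X (P_M x) ∈ W`, and `P_X` is a contraction
fixing `x`. -/
theorem norm_sub_starProjection_le_of_map_starProjection_le {X M W : Submodule 𝕜 E}
    [X.HasOrthogonalProjection] [M.HasOrthogonalProjection] [W.HasOrthogonalProjection]
    (hW : M.map (X.starProjection : E →ₗ[𝕜] E) ≤ W) {x : E} (hx : x ∈ X) :
    ‖x - W.starProjection x‖ ≤ ‖x - M.starProjection x‖ :=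
  calc ‖x - W.starProjection x‖ ≤ ‖x - X.starProjection (M.starProjection x)‖ :=
        W.norm_sub_starProjection_le x (hW ⟨_, M.starProjection_apply_mem x, rfl⟩)
    _ ≤ ‖x - M.starProjection x‖ := X.norm_sub_starProjection_le_of_mem hx _

end Submodule

theorem projection_of_optimal_subspace_general
    {H : Type*} [NormedAddCommGroup H] [InnerProductSpace ℂ H]
    {m n : ℕ} (f : Fin m → H)
    (X : Submodule ℂ H) (hX : X = Submodule.span ℂ (Set.range f)) [FiniteDimensional ℂ X]
    (M : Submodule ℂ H) [FiniteDimensional ℂ M] (hM : finrank ℂ M ≤ n)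
    (hopt : ∀ (M' : Submodule ℂ H) [FiniteDimensional ℂ M'], finrank ℂ M' ≤ n →
      ∑ i, ‖f i - (Submodule.orthogonalProjectionOnto M (f i) : H)‖ ^ 2 ≤
        ∑ i, ‖f i - (Submodule.orthogonalProjectionOnto M' (f i) : H)‖ ^ 2)
    (W : Submodule ℂ H) [FiniteDimensional ℂ W]
    (hW : W = M.map (X.subtype ∘ₗ (Submodule.orthogonalProjectionOnto X).toLinearMap)) :
    W ≤ X ∧ finrank ℂ W ≤ n ∧
      ∑ i, ‖f i - (Submodule.orthogonalProjectionOnto W (f i) : H)‖ ^ 2 =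
        ∑ i, ‖f i - (Submodule.orthogonalProjectionOnto M (f i) : H)‖ ^ 2 := by
  have hWX : W ≤ X := by
    rw [hW]
    rintro _ ⟨v, -, rfl⟩
    exact Submodule.coe_mem _
  have hWn : finrank ℂ W ≤ n := hW ▸ (Submodule.finrank_map_le _ _).trans hM
  refine ⟨hWX, hWn, le_antisymm (Finset.sum_le_sum fun i _ => ?_) (hopt W hWn)⟩
  have hfX : f i ∈ X := hX ▸ Submodule.subset_span ⟨i, rfl⟩
  simp only [← Submodule.starProjection_apply]
  gcongr
  exact Submodule.norm_sub_starProjection_le_of_map_starProjection_le hW.ge hfX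

/-- If `M` is a subspace of dimension at most `n` of a Hilbert space `H` minimizing the
least squares error `∑ ‖f i − P_{M'} f i‖²` among all subspaces `M'` of dimension at most
`n`, then `W = P_X (M)`, the image of `M` under the orthogonal projection onto
`X = span {f 1, …, f m}`, satisfies `W ⊆ X`, `dim W ≤ n`, and gives the same error as `M`. -/
theorem projection_of_optimal_subspace
    {H : Type*} [NormedAddCommGroup H] [InnerProductSpace ℂ H] [CompleteSpace H]
    {m n : ℕ} (f : Fin m → H)
    (X : Submodule ℂ H) (hX : X = Submodule.span ℂ (Set.range f)) [FiniteDimensional ℂ X]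
    (M : Submodule ℂ H) [FiniteDimensional ℂ M] (hM : finrank ℂ M ≤ n)
    (hopt : ∀ (M' : Submodule ℂ H) [FiniteDimensional ℂ M'], finrank ℂ M' ≤ n →
      ∑ i, ‖f i - (Submodule.orthogonalProjectionOnto M (f i) : H)‖ ^ 2 ≤
        ∑ i, ‖f i - (Submodule.orthogonalProjectionOnto M' (f i) : H)‖ ^ 2)
    (W : Submodule ℂ H) [FiniteDimensional ℂ W]
    (hW : W = M.map (X.subtype ∘ₗ (Submodule.orthogonalProjectionOnto X).toLinearMap)) :
    W ≤ X ∧ finrank ℂ W ≤ n ∧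
      ∑ i, ‖f i - (Submodule.orthogonalProjectionOnto W (f i) : H)‖ ^ 2 =
        ∑ i, ‖f i - (Submodule.orthogonalProjectionOnto M (f i) : H)‖ ^ 2 :=
  projection_of_optimal_subspace_general f X hX M hM hopt W hW
end

section
/- For any f ∈ X = span{f_1,…,f_m} and any finite-dimensional subspace M ⊆ H, with W = P_X(M) one has ‖f − P_W f‖ ≤ ‖f − P_M f‖. -/
namespace Submodule

variable {𝕜 E : Type*} [RCLike 𝕜] [NormedAddCommGroup E] [InnerProductSpace 𝕜 E]
  (K : Submodule 𝕜 E) [K.HasOrthogonalProjection]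

theorem norm_sub_starProjection_le_of_mem_s2 (v : E) {w : E} (hw : w ∈ K) :
    ‖v - K.starProjection v‖ ≤ ‖v - w‖ := by
  rw [starProjection_minimal]
  exact ciInf_le ⟨0, by rintro _ ⟨x, rfl⟩; positivity⟩ (⟨w, hw⟩ : K)

theorem norm_sub_starProjection_le_norm_sub {v : E} (hv : v ∈ K) (u : E) :
    ‖v - K.starProjection u‖ ≤ ‖v - u‖ := by
  calc ‖v - K.starProjection u‖ = ‖K.starProjection (v - u)‖ := by
        rw [map_sub, K.starProjection_eq_self_iff.2 hv]
    _ ≤ ‖v - u‖ := K.norm_starProjection_apply_le _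

end Submodule

theorem dist_projection_to_projected_subspace_le_general
    {H : Type*} [NormedAddCommGroup H] [InnerProductSpace ℂ H]
    (X : Submodule ℂ H) [FiniteDimensional ℂ X]
    (M : Submodule ℂ H) [FiniteDimensional ℂ M]
    (W : Submodule ℂ H) [FiniteDimensional ℂ W]
    (hW : W = M.map (X.subtype ∘ₗ (Submodule.orthogonalProjection X).toLinearMap))
    (f : H) (hf : f ∈ X) :
    ‖f - (Submodule.orthogonalProjection W f : H)‖ ≤ ‖f - (Submodule.orthogonalProjection M f : H)‖ := by
  set g := M.starProjection f
  have hPg : X.starProjection g ∈ W := hW ▸ ⟨g, M.starProjection_apply_mem f, rfl⟩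
  calc ‖f - W.starProjection f‖ ≤ ‖f - X.starProjection g‖ :=
        W.norm_sub_starProjection_le_of_mem_s2 f hPg
    _ ≤ ‖f - g‖ := X.norm_sub_starProjection_le_norm_sub hf g

/-- For any `f` in `X = span {f 1, …, f m}` and any finite-dimensional subspace `M` of a
Hilbert space `H`, with `W = P_X (M)` the image of `M` under the orthogonal projection
onto `X`, one has `‖f − P_W f‖ ≤ ‖f − P_M f‖`. -/
theorem dist_projection_to_projected_subspace_le
    {H : Type*} [NormedAddCommGroup H] [InnerProductSpace ℂ H] [CompleteSpace H]
    {m : ℕ} (f' : Fin m → H)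
    (X : Submodule ℂ H) (hX : X = Submodule.span ℂ (Set.range f')) [FiniteDimensional ℂ X]
    (M : Submodule ℂ H) [FiniteDimensional ℂ M]
    (W : Submodule ℂ H) [FiniteDimensional ℂ W]
    (hW : W = M.map (X.subtype ∘ₗ (Submodule.orthogonalProjection X).toLinearMap))
    (f : H) (hf : f ∈ X) :
    ‖f - (Submodule.orthogonalProjection W f : H)‖ ≤ ‖f - (Submodule.orthogonalProjection M f : H)‖ :=
  dist_projection_to_projected_subspace_le_general X M W hW f hf
end
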